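/- arXiv:1805.02785 — 2 statements merged into one kernel-verified Lean document; each statement's English description precedes it below -/
import Mathlib

section
/- For a fully connected deterministic MDP with a single reward source r_g > 0 at state s_g and discount factor 0 < γ < 1, the value function at every state s equals V(s) = γ^{δ(s, s_g)} · r_g / (1 − γ^{φ(s_g)}), where δ(s, s_g) is the distance from s to s_g, φ(s_g) is the minimum cycle length at s_g, and V(s) is the supremum over all infinite action sequences starting at s of the discounted return. -/
/-!
On any trajectory, the visits to `s_g` start no earlier than `δ = δ(s, s_g)` and are at least
`φ = φ(s_g)` steps apart, so the `k`-th visit happens no earlier than `δ + k φ` and the return is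
at most `r_g ∑ₖ γ ^ (δ + k φ) = γ ^ δ r_g / (1 - γ ^ φ)`. Following a shortest path to `s_g` and
then a shortest cycle through `s_g` forever visits `s_g` at all these times.
-/

/-- The trajectory induced by an infinite action sequence `a` from initial
state `s`: `traj T s a 0 = s` and `traj T s a (t+1) = T (traj T s a t) (a t)`. -/
def traj {S A : Type*} (T : S → A → S) (s : S) (a : ℕ → A) : ℕ → S
  | 0 => s
  | t + 1 => T (traj T s a t) (a t)

section Geometric

variable {γ : ℝ}

lemma hasSum_pow_add_mul (hγ0 : 0 ≤ γ) (hγ1 : γ < 1) (δ : ℕ) {φ : ℕ} (hφ : φ ≠ 0) :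
    HasSum (fun k : ℕ => γ ^ (δ + k * φ)) (γ ^ δ / (1 - γ ^ φ)) := by
  have h := (hasSum_geometric_of_lt_one (pow_nonneg hγ0 φ) (pow_lt_one₀ hγ0 hγ1 hφ)).mul_left
    (γ ^ δ)
  simpa only [pow_add, pow_mul', div_eq_mul_inv] using h

lemma le_tsum_pow_of_forall_add_mul_mem (hγ0 : 0 ≤ γ) (hγ1 : γ < 1) {V : Set ℕ} {δ φ : ℕ}
    (hφ : φ ≠ 0) (hV : ∀ k, δ + k * φ ∈ V) :
    γ ^ δ / (1 - γ ^ φ) ≤ ∑' t : V, γ ^ (t : ℕ) := by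
  rw [← (hasSum_pow_add_mul hγ0 hγ1 δ hφ).tsum_eq]
  refine tsum_comp_le_tsum_of_inj (f := fun t : V => γ ^ (t : ℕ))
    ((summable_geometric_of_lt_one hγ0 hγ1).subtype V) (fun _ => by positivity)
    (i := fun k => ⟨δ + k * φ, hV k⟩) fun k k' h => ?_
  simpa [hφ] using congrArg Subtype.val h

/-- Compare with `∑ₖ γ ^ (δ + k * φ)` through `t ↦ (t - δ) / φ`, which is injective on `V` by
the separation and satisfies `δ + (t - δ) / φ * φ ≤ t`. -/
lemma tsum_pow_le_of_separated (hγ0 : 0 ≤ γ) (hγ1 : γ < 1) {V : Set ℕ} {δ φ : ℕ} (hφ : 0 < φ)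
    (hδ : ∀ t ∈ V, δ ≤ t) (hsep : ∀ t ∈ V, ∀ u ∈ V, t < u → t + φ ≤ u) :
    ∑' t : V, γ ^ (t : ℕ) ≤ γ ^ δ / (1 - γ ^ φ) := by
  have hgeo := hasSum_pow_add_mul hγ0 hγ1 δ hφ.ne'
  rw [← hgeo.tsum_eq]
  have hmono : StrictMonoOn (fun t => (t - δ) / φ) V := by
    intro t ht u hu htu
    have := hsep t ht u hu htu
    have := hδ t ht
    calc (t - δ) / φ < (t - δ) / φ + 1 := Nat.lt_succ_self _
      _ = (t - δ + φ) / φ := (Nat.add_div_right _ hφ).symm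
      _ ≤ (u - δ) / φ := Nat.div_le_div_right (by omega)
  refine Summable.tsum_le_tsum_of_inj (fun t : V => (t - δ) / φ) ?_ (fun _ _ => by positivity)
    (fun t => ?_) ((summable_geometric_of_lt_one hγ0 hγ1).subtype V) hgeo.summable
  · exact fun t u h => Subtype.ext (hmono.injOn t.2 u.2 h)
  · have := hδ t t.2
    have := Nat.div_mul_le_self (t - δ) φ
    exact pow_le_pow_of_le_one hγ0 hγ1.le (by omega)

end Geometric

section Trajectory

variable {S A : Type*} (T : S → A → S)

lemma traj_add (s : S) (a : ℕ → A) (m n : ℕ) :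
    traj T s a (m + n) = traj T (traj T s a m) (fun i => a (m + i)) n := by
  induction n with
  | zero => rfl
  | succ n ih => rw [← Nat.add_assoc, traj, ih]; rfl

lemma traj_eq_foldl_ofFn (s : S) (a : ℕ → A) (n : ℕ) :
    traj T s a n = (List.ofFn fun i : Fin n => a i).foldl T s := by
  induction n with
  | zero => rfl
  | succ n ih => rw [List.ofFn_succ', List.concat_eq_append, List.foldl_concat, traj, ih]; rfl

lemma traj_length_eq_foldl {s : S} {a : ℕ → A} {l : List A}
    (h : ∀ i (hi : i < l.length), a i = l[i]) : traj T s a l.length = l.foldl T s := by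
  rw [traj_eq_foldl_ofFn]
  congr 1
  exact List.ext_getElem (by simp) fun i hi _ => by simpa using h i (by simpa using hi)

lemma sInf_length_le_of_traj_eq {s g : S} {a : ℕ → A} {t : ℕ} (h : traj T s a t = g) :
    sInf {t : ℕ | ∃ l : List A, l.length = t ∧ l.foldl T s = g} ≤ t :=
  Nat.sInf_le ⟨_, List.length_ofFn, (traj_eq_foldl_ofFn T s a t).symm.trans h⟩

lemma add_sInf_cycle_length_le_of_traj_eq {s g : S} {a : ℕ → A} {t u : ℕ}
    (ht : traj T s a t = g) (hu : traj T s a u = g) (htu : t < u) :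
    t + sInf {t : ℕ | 1 ≤ t ∧ ∃ l : List A, l.length = t ∧ l.foldl T g = g} ≤ u := by
  obtain ⟨n, rfl⟩ := Nat.exists_eq_add_of_lt htu
  rw [Nat.add_assoc, traj_add, ht] at hu
  have := Nat.sInf_le (s := {t : ℕ | 1 ≤ t ∧ ∃ l : List A, l.length = t ∧ l.foldl T g = g})
    ⟨by omega, _, List.length_ofFn, (traj_eq_foldl_ofFn T g _ _).symm.trans hu⟩
  omega

def followThenCycle (l cyc : List A) (hc : cyc ≠ []) (t : ℕ) : A :=
  if h : t < l.length then l[t]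
  else cyc[(t - l.length) % cyc.length]'(Nat.mod_lt _ (List.length_pos_iff.2 hc))

lemma traj_followThenCycle {s g : S} {l cyc : List A} (hc : cyc ≠ []) (hl : l.foldl T s = g)
    (hcyc : cyc.foldl T g = g) (k : ℕ) :
    traj T s (followThenCycle l cyc hc) (l.length + k * cyc.length) = g := by
  induction k with
  | zero =>
    simpa using
      (traj_length_eq_foldl T (a := followThenCycle l cyc hc) fun i hi => dif_pos hi).trans hl
  | succ k ih =>
    rw [Nat.succ_mul, ← Nat.add_assoc, traj_add, ih]
    refine (traj_length_eq_foldl T fun i hi => ?_).trans hcyc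
    simp only [followThenCycle, show ¬ l.length + k * cyc.length + i < l.length by omega,
      dif_neg, not_false_eq_true]
    congr 1
    rw [show l.length + k * cyc.length + i - l.length = i + k * cyc.length by omega,
      Nat.add_mul_mod_self_right, Nat.mod_eq_of_lt hi]

end Trajectory

lemma tsum_discounted_single_source {S A : Type*} (T : S → A → S) {R : S → ℝ} (γ : ℝ) {s_g : S}
    {r_g : ℝ} (hRg : R s_g = r_g) (hR0 : ∀ s : S, s ≠ s_g → R s = 0) (s : S) (a : ℕ → A) :
    ∑' t : ℕ, γ ^ t * R (traj T s a t) = (∑' t : {t | traj T s a t = s_g}, γ ^ (t : ℕ)) * r_g := by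
  rw [← tsum_subtype_eq_of_support_subset (s := {t | traj T s a t = s_g}), ← tsum_mul_right]
  · exact tsum_congr fun t => by rw [t.2, hRg]
  · exact fun t ht => by_contra fun h => ht (by simp [hR0 _ h])

theorem single_source_value_function_general
    {S A : Type*} [Nonempty A]
    (T : S → A → S) (R : S → ℝ) (γ : ℝ) (hγ0 : 0 < γ) (hγ1 : γ < 1)
    (hconn : ∀ s s' : S, ∃ l : List A, l.foldl T s = s')
    (s_g : S) (r_g : ℝ) (hr : 0 < r_g)
    (hRg : R s_g = r_g) (hR0 : ∀ s : S, s ≠ s_g → R s = 0)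
    (s : S) :
    (⨆ a : ℕ → A, ∑' t : ℕ, γ ^ t * R (traj T s a t))
      = γ ^ sInf {t : ℕ | ∃ l : List A, l.length = t ∧ l.foldl T s = s_g} *
        (r_g /
          (1 - γ ^ sInf {t : ℕ | 1 ≤ t ∧ ∃ l : List A, l.length = t ∧ l.foldl T s_g = s_g})) := by
  set δ := sInf {t : ℕ | ∃ l : List A, l.length = t ∧ l.foldl T s = s_g}
  set φ := sInf {t : ℕ | 1 ≤ t ∧ ∃ l : List A, l.length = t ∧ l.foldl T s_g = s_g}
  obtain ⟨path, hpath_len, hpath⟩ : δ ∈ {t : ℕ | ∃ l : List A, l.length = t ∧ l.foldl T s = s_g} :=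
    Nat.sInf_mem <| (hconn s s_g).elim fun l hl => ⟨l.length, l, rfl, hl⟩
  obtain ⟨hφ, cyc, hcyc_len, hcyc⟩ :
      φ ∈ {t : ℕ | 1 ≤ t ∧ ∃ l : List A, l.length = t ∧ l.foldl T s_g = s_g} := by
    obtain ⟨l, hl⟩ := hconn (T s_g (Classical.arbitrary A)) s_g
    exact Nat.sInf_mem ⟨l.length + 1, by simp, Classical.arbitrary A :: l, rfl, hl⟩
  have hcyc_ne : cyc ≠ [] := List.ne_nil_of_length_pos (by omega)
  simp_rw [tsum_discounted_single_source T γ hRg hR0 s]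
  rw [show γ ^ δ * (r_g / (1 - γ ^ φ)) = γ ^ δ / (1 - γ ^ φ) * r_g by ring]
  have upper (a : ℕ → A) :
      (∑' t : {t | traj T s a t = s_g}, γ ^ (t : ℕ)) * r_g ≤ γ ^ δ / (1 - γ ^ φ) * r_g := by
    refine mul_le_mul_of_nonneg_right (tsum_pow_le_of_separated hγ0.le hγ1 hφ ?_ ?_) hr.le
    · exact fun t ht => sInf_length_le_of_traj_eq T ht
    · exact fun t ht u hu htu => add_sInf_cycle_length_le_of_traj_eq T ht hu htu
  refine le_antisymm (ciSup_le upper) ?_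
  refine le_ciSup_of_le ⟨_, Set.forall_mem_range.2 upper⟩ (followThenCycle path cyc hcyc_ne) ?_
  refine mul_le_mul_of_nonneg_right (le_tsum_pow_of_forall_add_mul_mem hγ0.le hγ1 (by omega)
    fun k => ?_) hr.le
  rw [← hpath_len, ← hcyc_len]
  exact traj_followThenCycle T hcyc_ne hpath hcyc k

/-- For a fully connected deterministic MDP with a single reward source
`r_g > 0` at state `s_g` and discount factor `0 < γ < 1`, the value function
at every state `s` — the supremum over all infinite action sequences of the
discounted return — equals `γ ^ δ(s, s_g) * r_g / (1 - γ ^ φ(s_g))`, where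
`δ(s, s_g)` is the distance from `s` to `s_g` and `φ(s_g)` is the minimum
cycle length at `s_g`. -/
theorem single_source_value_function
    {S A : Type*} [Fintype S] [Nonempty S] [Fintype A] [Nonempty A]
    (T : S → A → S) (R : S → ℝ) (γ : ℝ) (hγ0 : 0 < γ) (hγ1 : γ < 1)
    (hconn : ∀ s s' : S, ∃ l : List A, l.foldl T s = s')
    (s_g : S) (r_g : ℝ) (hr : 0 < r_g)
    (hRg : R s_g = r_g) (hR0 : ∀ s : S, s ≠ s_g → R s = 0)
    (s : S) :
    (⨆ a : ℕ → A, ∑' t : ℕ, γ ^ t * R (traj T s a t))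
      = γ ^ sInf {t : ℕ | ∃ l : List A, l.length = t ∧ l.foldl T s = s_g} *
        (r_g /
          (1 - γ ^ sInf {t : ℕ | 1 ≤ t ∧ ∃ l : List A, l.length = t ∧ l.foldl T s_g = s_g})) :=
  single_source_value_function_general T R γ hγ0 hγ1 hconn s_g r_g hr hRg hR0 s
end

section
/- The optimal value function is the statewise maximum over stationary policies: if V* : S → ℝ satisfies LV* = V*, then for every state s ∈ S, V*(s) = max over stationary policies π : S → A of V^π(s), where V^π is the unique fixed point of the policy operator L^π (the maximum is over the finitely many policies and is attained). -/
/-!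
A policy value can never exceed a fixed point of the Bellman operator, and the policy that is
greedy with respect to `V*` has `V*` as a fixed point of its policy operator, hence as its value.
Both facts are instances of one comparison principle: a subsolution of a policy equation lies
below a supersolution, because their difference `D` satisfies `D ≤ γ • K D` for a stochastic
matrix `K`, which at a maximum point of `D` forces `max D ≤ γ · max D`.
-/

/-- The Bellman operator of a finite MDP with transition probabilities `P`,
reward `R`, and discount factor `γ`:
`(L V)(s) = R s + γ * max_{a} ∑_{s'} P s a s' * V s'`. -/
noncomputable def bellmanOp {S A : Type*} [Fintype S] [Fintype A] [Nonempty A]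
    (P : S → A → S → ℝ) (R : S → ℝ) (γ : ℝ) (V : S → ℝ) : S → ℝ :=
  fun s => R s + γ * Finset.univ.sup' Finset.univ_nonempty
    (fun a : A => ∑ s' : S, P s a s' * V s')

/-- The policy operator of a stationary policy `π : S → A`:
`(L^π V)(s) = R s + γ * ∑_{s'} P s (π s) s' * V s'`. -/
noncomputable def policyOp {S A : Type*} [Fintype S]
    (P : S → A → S → ℝ) (R : S → ℝ) (γ : ℝ) (π : S → A) (V : S → ℝ) : S → ℝ :=
  fun s => R s + γ * ∑ s' : S, P s (π s) s' * V s'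

open Finset

theorem nonpos_of_le_smul_stochastic {S : Type*} [Fintype S] (K : S → S → ℝ)
    (hK0 : ∀ s s', 0 ≤ K s s') (hK1 : ∀ s, ∑ s', K s s' = 1) {γ : ℝ} (hγ0 : 0 ≤ γ)
    (hγ1 : γ < 1) (D : S → ℝ) (hD : ∀ s, D s ≤ γ * ∑ s', K s s' * D s') (s : S) :
    D s ≤ 0 := by
  have : Nonempty S := ⟨s⟩
  obtain ⟨s₀, -, hmax⟩ := exists_max_image univ D univ_nonempty
  have hmean : ∑ s', K s₀ s' * D s' ≤ D s₀ :=
    calc ∑ s', K s₀ s' * D s' ≤ ∑ s', K s₀ s' * D s₀ :=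
          sum_le_sum fun s' _ => mul_le_mul_of_nonneg_left (hmax s' (mem_univ _)) (hK0 s₀ s')
      _ = D s₀ := by rw [← sum_mul, hK1, one_mul]
  have hs₀ : D s₀ ≤ γ * D s₀ := (hD s₀).trans (mul_le_mul_of_nonneg_left hmean hγ0)
  have : D s₀ ≤ 0 := by nlinarith
  exact (hmax s (mem_univ _)).trans this

section PolicyOperators

variable {S A : Type*} [Fintype S] (P : S → A → S → ℝ) (R : S → ℝ) (γ : ℝ)

theorem policyOp_sub_policyOp (π : S → A) (U V : S → ℝ) (s : S) :
    policyOp P R γ π U s - policyOp P R γ π V s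
      = γ * ∑ s', P s (π s) s' * (U s' - V s') := by
  simp only [policyOp, mul_sub, sum_sub_distrib]
  ring

theorem le_of_le_policyOp_of_policyOp_le (hP0 : ∀ s a s', 0 ≤ P s a s')
    (hP1 : ∀ s a, ∑ s', P s a s' = 1) (hγ0 : 0 ≤ γ) (hγ1 : γ < 1) (π : S → A)
    {U V : S → ℝ} (hU : ∀ s, U s ≤ policyOp P R γ π U s)
    (hV : ∀ s, policyOp P R γ π V s ≤ V s) (s : S) : U s ≤ V s := by
  have hD : ∀ s, U s - V s ≤ γ * ∑ s', P s (π s) s' * (U s' - V s') := fun s => by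
    rw [← policyOp_sub_policyOp]
    linarith [hU s, hV s]
  linarith [nonpos_of_le_smul_stochastic (fun s s' => P s (π s) s') (fun s s' => hP0 _ _ _)
    (fun s => hP1 _ _) hγ0 hγ1 _ hD s]

variable [Fintype A] [Nonempty A]

theorem policyOp_le_bellmanOp (hγ0 : 0 ≤ γ) (π : S → A) (V : S → ℝ) (s : S) :
    policyOp P R γ π V s ≤ bellmanOp P R γ V s := by
  unfold policyOp bellmanOp
  gcongr
  exact le_sup' (fun a => ∑ s', P s a s' * V s') (mem_univ (π s))

theorem exists_policyOp_eq_bellmanOp (V : S → ℝ) :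
    ∃ π : S → A, policyOp P R γ π V = bellmanOp P R γ V := by
  choose π _ hπ using fun s =>
    exists_mem_eq_sup' univ_nonempty (fun a => ∑ s', P s a s' * V s')
  exact ⟨π, funext fun s => by simp only [policyOp, bellmanOp, hπ s]⟩

end PolicyOperators

theorem optimal_value_is_max_over_policies_general
    {S A : Type*} [Fintype S] [DecidableEq S] [Fintype A] [Nonempty A]
    (P : S → A → S → ℝ) (R : S → ℝ) (γ : ℝ) (hγ0 : 0 < γ) (hγ1 : γ < 1)
    (hP0 : ∀ s a s', 0 ≤ P s a s') (hP1 : ∀ s a, ∑ s' : S, P s a s' = 1)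
    (Vstar : S → ℝ) (hfix : bellmanOp P R γ Vstar = Vstar)
    (Vpol : (S → A) → S → ℝ)
    (hVpol : ∀ π : S → A, policyOp P R γ π (Vpol π) = Vpol π) :
    ∀ s : S,
      Vstar s
        = Finset.univ.sup' ⟨fun _ => Classical.arbitrary A, Finset.mem_univ _⟩
            (fun π : S → A => Vpol π s) := by
  intro s
  have hcompare := le_of_le_policyOp_of_policyOp_le P R γ hP0 hP1 hγ0.le hγ1
  obtain ⟨πg, hπg⟩ := exists_policyOp_eq_bellmanOp P R γ Vstar
  refine le_antisymm ?_ (sup'_le _ _ fun π _ => ?_)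
  · have hgreedy : Vstar s ≤ Vpol πg s :=
      hcompare πg (fun s => by rw [hπg, hfix]) (fun s => (congrFun (hVpol πg) s).le) s
    exact hgreedy.trans (le_sup' (fun π : S → A => Vpol π s) (mem_univ πg))
  · refine hcompare π (fun s => (congrFun (hVpol π) s).ge) (fun s => ?_) s
    simpa only [hfix] using policyOp_le_bellmanOp P R γ hγ0.le π Vstar s

/-- The optimal value function is the statewise maximum over the finitely
many stationary policies of their policy values: if `L V* = V*` and, for each
policy `π`, `Vpol π` is the (unique) fixed point of the policy operator `L^π`,
then for every state `s`, `V*(s) = max_π (Vpol π)(s)` (attained). -/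
theorem optimal_value_is_max_over_policies
    {S A : Type*} [Fintype S] [Nonempty S] [DecidableEq S] [Fintype A] [Nonempty A]
    (P : S → A → S → ℝ) (R : S → ℝ) (γ : ℝ) (hγ0 : 0 < γ) (hγ1 : γ < 1)
    (hP0 : ∀ s a s', 0 ≤ P s a s') (hP1 : ∀ s a, ∑ s' : S, P s a s' = 1)
    (Vstar : S → ℝ) (hfix : bellmanOp P R γ Vstar = Vstar)
    (Vpol : (S → A) → S → ℝ)
    (hVpol : ∀ π : S → A, policyOp P R γ π (Vpol π) = Vpol π) :
    ∀ s : S,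
      Vstar s
        = Finset.univ.sup' ⟨fun _ => Classical.arbitrary A, Finset.mem_univ _⟩
            (fun π : S → A => Vpol π s) :=
  optimal_value_is_max_over_policies_general P R γ hγ0 hγ1 hP0 hP1 Vstar hfix Vpol hVpol
end
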